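/- For every n ∈ ℕ and all x, y ∈ ℂ, the Jackson q-integral of the q-Frobenius–Euler polynomial satisfies ∫_x^{x+y} H_{n,q}(u|λ) d_q u = (1/[n+1]_q) · ( H_{n+1,q}(x+y|λ) − H_{n+1,q}(x|λ) ). -/

import Mathlib

open Finset Polynomial

/-- The `q`-integer `[n]_q = (1 - q^n)/(1 - q)` viewed in `ℂ`. -/
noncomputable def qInt (q : ℝ) (n : ℕ) : ℂ := (1 - (q : ℂ) ^ n) / (1 - (q : ℂ))

/-- The `q`-factorial `[n]_q! = ∏_{j=1}^n [j]_q`. -/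
noncomputable def qFact (q : ℝ) (n : ℕ) : ℂ := ∏ j ∈ Finset.range n, qInt q (j + 1)

/-- The `q`-binomial coefficient `[n]_q!/([k]_q! [n-k]_q!)`. -/
noncomputable def qBinom (q : ℝ) (n k : ℕ) : ℂ := qFact q n / (qFact q k * qFact q (n - k))

/-- The formal `q`-exponential `e_q(t) = ∑ t^n/[n]_q!` in `ℂ[x][[t]]`. -/
noncomputable def qExp (q : ℝ) : PowerSeries (Polynomial ℂ) :=
  PowerSeries.mk fun n => Polynomial.C (1 / qFact q n)

/-- The formal series `e_q(xt) = ∑ x^n t^n/[n]_q!` in `ℂ[x][[t]]`. -/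
noncomputable def qExpX (q : ℝ) : PowerSeries (Polynomial ℂ) :=
  PowerSeries.mk fun n => Polynomial.C (1 / qFact q n) * Polynomial.X ^ n

/-- `H : ℕ → ℂ[x]` is the family of `q`-Frobenius-Euler polynomials `H_{n,q}(x|λ)`:
`(∑ H_n t^n/[n]_q!) ⬝ (e_q(t) - λ) = (1 - λ) e_q(xt)` in `ℂ[x][[t]]`. -/
def IsqFrobeniusEuler (q : ℝ) (lam : ℂ) (H : ℕ → Polynomial ℂ) : Prop :=
  (PowerSeries.mk fun n => Polynomial.C (1 / qFact q n) * H n) *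
      (qExp q - PowerSeries.C (Polynomial.C lam)) =
    PowerSeries.C (Polynomial.C (1 - lam)) * qExpX q

/-- The Jackson `q`-integral `∫₀^z p(u) d_q u = (1-q) z ∑_{a≥0} q^a p(q^a z)`. -/
noncomputable def jacksonIntegral (q : ℝ) (p : Polynomial ℂ) (z : ℂ) : ℂ :=
  (1 - (q : ℂ)) * z * ∑' a : ℕ, (q : ℂ) ^ a * p.eval ((q : ℂ) ^ a * z)

/-!
Setting `x = 0` in the defining identity gives `(∑ H_n(0) tⁿ/[n]_q!) (e_q(t) - λ) = 1 - λ`, so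
dividing by `e_q(t) - λ` factors the generating function as `(∑ H_n(0) tⁿ/[n]_q!) e_q(xt)`: the
`H_n` form a `q`-Appell sequence, `H_n(x) = ∑_k C(n,k)_q H_{n-k}(0) xᵏ`. Since
`[k+1]_q C(n+1,k+1)_q = [n+1]_q C(n,k)_q`, the polynomial `H_{n+1}/[n+1]_q` is, coefficientwise,
a `q`-antiderivative of `H_n`. The Jackson integral sends `uᵏ` to `z^{k+1}/[k+1]_q` (a geometric
series in `q^{k+1}`), so it inverts the `q`-derivative on polynomials.
-/

section qNumbers

variable {q : ℝ}

lemma norm_ofReal_pow_lt_one (hq : |q| < 1) {m : ℕ} (hm : m ≠ 0) : ‖(q : ℂ) ^ m‖ < 1 := by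
  simpa [norm_pow, Complex.norm_real] using pow_lt_one₀ (abs_nonneg q) hq hm

lemma ofReal_pow_ne_one (hq : |q| < 1) {m : ℕ} (hm : m ≠ 0) : (q : ℂ) ^ m ≠ 1 := fun h => by
  simpa [h] using norm_ofReal_pow_lt_one hq hm

lemma qInt_ne_zero (hq : |q| < 1) {m : ℕ} (hm : m ≠ 0) : qInt q m ≠ 0 :=
  div_ne_zero (sub_ne_zero.mpr (ofReal_pow_ne_one hq hm).symm)
    (sub_ne_zero.mpr (by simpa using (ofReal_pow_ne_one hq one_ne_zero).symm))

lemma qFact_ne_zero (hq : |q| < 1) (n : ℕ) : qFact q n ≠ 0 :=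
  prod_ne_zero_iff.mpr fun j _ => qInt_ne_zero hq j.succ_ne_zero

lemma qFact_succ (n : ℕ) : qFact q (n + 1) = qFact q n * qInt q (n + 1) :=
  prod_range_succ _ n

lemma qBinom_succ_succ_mul_qInt (hq : |q| < 1) {n k : ℕ} (hk : k ≤ n) :
    qBinom q (n + 1) (k + 1) * qInt q (k + 1) = qInt q (n + 1) * qBinom q n k := by
  have hnk : n + 1 - (k + 1) = n - k := by omega
  have := qFact_ne_zero hq k
  have := qFact_ne_zero hq (n - k)
  have := qInt_ne_zero hq k.succ_ne_zero
  simp only [qBinom, hnk, qFact_succ]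
  field_simp

lemma inv_qInt_eq_tsum (hq : |q| < 1) {m : ℕ} (hm : m ≠ 0) :
    (qInt q m)⁻¹ = (1 - q) * ∑' a : ℕ, ((q : ℂ) ^ m) ^ a := by
  rw [tsum_geometric_of_norm_lt_one (norm_ofReal_pow_lt_one hq hm), qInt, inv_div, div_eq_mul_inv]

end qNumbers

section Jackson

variable {q : ℝ}

lemma jacksonIntegral_eq_sum_range (hq : |q| < 1) (p : ℂ[X]) (z : ℂ) {N : ℕ}
    (hN : p.natDegree < N) :
    jacksonIntegral q p z = ∑ k ∈ range N, p.coeff k * z ^ (k + 1) / qInt q (k + 1) := by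
  have hlt (k : ℕ) : ‖(q : ℂ) ^ (k + 1)‖ < 1 := norm_ofReal_pow_lt_one hq k.succ_ne_zero
  have heval (a : ℕ) : (q : ℂ) ^ a * p.eval ((q : ℂ) ^ a * z) =
      ∑ k ∈ range N, p.coeff k * z ^ k * ((q : ℂ) ^ (k + 1)) ^ a := by
    rw [eval_eq_sum_range' hN, mul_sum]
    exact sum_congr rfl fun k _ => by ring
  rw [jacksonIntegral, tsum_congr heval, Summable.tsum_finsetSum
    fun k _ => (summable_geometric_of_norm_lt_one (hlt k)).mul_left _, mul_sum]
  refine sum_congr rfl fun k _ => ?_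
  rw [tsum_mul_left, div_eq_mul_inv _ (qInt q _), inv_qInt_eq_tsum hq k.succ_ne_zero]
  ring

lemma mul_jacksonIntegral_of_coeff_succ (hq : |q| < 1) {p P : ℂ[X]} {c : ℂ}
    (hpP : ∀ k, P.coeff (k + 1) * qInt q (k + 1) = c * p.coeff k) (z : ℂ) :
    c * jacksonIntegral q p z = P.eval z - P.eval 0 := by
  set N := max p.natDegree P.natDegree + 1
  have hP : P.eval z - P.eval 0 = ∑ k ∈ range N, P.coeff (k + 1) * z ^ (k + 1) := by
    rw [eval_eq_sum_range' (n := N + 1) (by omega), sum_range_succ', ← coeff_zero_eq_eval_zero]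
    ring
  rw [jacksonIntegral_eq_sum_range hq p z (N := N) (by omega), hP, mul_sum]
  refine sum_congr rfl fun k _ => ?_
  have := qInt_ne_zero hq k.succ_ne_zero
  rw [← mul_div_assoc, ← mul_assoc, ← hpP]
  field_simp

end Jackson

namespace IsqFrobeniusEuler

variable {q : ℝ} {lam : ℂ} {H : ℕ → ℂ[X]}

lemma qExp_sub_C_ne_zero (hlam : lam ≠ 1) : qExp q - PowerSeries.C (C lam) ≠ 0 := fun h => by
  have h₀ := congrArg PowerSeries.constantCoeff h
  simp [qExp, qFact, sub_eq_zero] at h₀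
  exact hlam (C_injective (h₀.symm.trans C_1.symm))

lemma genFun_eq_mul_qExpX (hlam : lam ≠ 1) (hH : IsqFrobeniusEuler q lam H) :
    (PowerSeries.mk fun n => C (1 / qFact q n) * H n) =
      (PowerSeries.mk fun n => C (1 / qFact q n * (H n).eval 0)) * qExpX q := by
  set ev₀ := PowerSeries.map (C.comp (evalRingHom (0 : ℂ)))
  have hE : ev₀ (qExp q - PowerSeries.C (C lam)) = qExp q - PowerSeries.C (C lam) := by
    ext m : 1
    rw [PowerSeries.coeff_map]
    rcases m with _ | m <;> simp [qExp]
  have hX : ev₀ (qExpX q) = 1 := by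
    ext m : 1
    rcases m with _ | m <;> simp [ev₀, qExpX, qFact, PowerSeries.coeff_one]
  have hF : ev₀ (PowerSeries.mk fun n => C (1 / qFact q n) * H n) =
      PowerSeries.mk fun n => C (1 / qFact q n * (H n).eval 0) := by
    ext m : 1
    simp [ev₀]
  have hH₀ := congrArg ev₀ hH
  rw [map_mul, map_mul, hE, hF, hX, mul_one, PowerSeries.map_C, RingHom.comp_apply,
    coe_evalRingHom, eval_C] at hH₀
  refine mul_right_cancel₀ (qExp_sub_C_ne_zero (q := q) hlam) ?_
  rw [hH, mul_right_comm, hH₀]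

lemma coeff_eq_qBinom_mul (hq : |q| < 1) (hlam : lam ≠ 1) (hH : IsqFrobeniusEuler q lam H)
    (n k : ℕ) : (H n).coeff k = if k ≤ n then qBinom q n k * (H (n - k)).eval 0 else 0 := by
  have h := congrArg (fun F => (PowerSeries.coeff n F).coeff k) (genFun_eq_mul_qExpX hlam hH)
  rw [mul_comm] at h
  simp only [PowerSeries.coeff_mul, Finset.Nat.sum_antidiagonal_eq_sum_range_succ_mk, qExpX,
    PowerSeries.coeff_mk, finsetSum_coeff] at h
  simp only [mul_right_comm _ (X ^ _), ← C_mul, coeff_C_mul, coeff_X_pow, mul_ite, mul_one,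
    mul_zero, sum_ite_eq, mem_range, Nat.lt_succ_iff] at h
  have := qFact_ne_zero hq n
  split_ifs at h ⊢ with hk
  · have := qFact_ne_zero hq k
    have := qFact_ne_zero hq (n - k)
    rw [qBinom]
    field_simp at h ⊢
    linear_combination h
  · simpa [this] using h

lemma coeff_succ_mul_qInt (hq : |q| < 1) (hlam : lam ≠ 1) (hH : IsqFrobeniusEuler q lam H)
    (n k : ℕ) : (H (n + 1)).coeff (k + 1) * qInt q (k + 1) = qInt q (n + 1) * (H n).coeff k := by
  simp only [coeff_eq_qBinom_mul hq hlam hH, Nat.add_le_add_iff_right, Nat.add_sub_add_right]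
  split_ifs with hk
  · rw [mul_right_comm, qBinom_succ_succ_mul_qInt hq hk, mul_assoc]
  · simp

end IsqFrobeniusEuler

/-- `∫_x^{x+y} H_{n,q}(u|λ) d_q u
      = (1/[n+1]_q)(H_{n+1,q}(x+y|λ) - H_{n+1,q}(x|λ))`. -/
theorem jacksonIntegral_qFrobeniusEuler
    (q : ℝ) (hq0 : 0 < q) (hq1 : q < 1) (lam : ℂ) (hlam : lam ≠ 1)
    (H : ℕ → Polynomial ℂ) (hH : IsqFrobeniusEuler q lam H) (n : ℕ) (x y : ℂ) :
    jacksonIntegral q (H n) (x + y) - jacksonIntegral q (H n) x =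
      (1 / qInt q (n + 1)) * ((H (n + 1)).eval (x + y) - (H (n + 1)).eval x) := by
  have hq : |q| < 1 := abs_lt.mpr ⟨by linarith, hq1⟩
  have hJ := mul_jacksonIntegral_of_coeff_succ hq (hH.coeff_succ_mul_qInt hq hlam n)
  have := qInt_ne_zero hq n.succ_ne_zero
  field_simp
  linear_combination hJ (x + y) - hJ x
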